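/- arXiv:1407.1912 — 5 statements merged into one kernel-verified Lean document; each statement's English description precedes it below -/
import Mathlib

section
/- The function V(x) = −2·log( (1/√2)·log(1/‖x‖) ), defined for x ∈ ℝ² with 0 < ‖x‖ < 1, satisfies ΔV(x) − exp(V(x))/‖x‖² = 0 for all x with 0 < ‖x‖ < 1. -/
/-!
Writing `s = ‖x‖²`, the function is `V(x) = φ(s)` with `φ(s) = -2 log(-log s / (2√2))`.
For a function of `‖x‖²` on the plane, `Δ(φ ∘ ‖·‖²)(x) = 4 φ'(s) + 4 s φ''(s)`, and
`e^φ = 8 / (log s)²`; with `φ'(s) = -2 / (s log s)` the equation `ΔV = e^V / ‖x‖²` becomes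
an identity between rational functions of `s` and `log s`.
-/

/-- The Euclidean Laplacian on `ℝ²`: `Δu = ∂²u/∂x₁² + ∂²u/∂x₂²`. -/
noncomputable def laplacian (u : EuclideanSpace ℝ (Fin 2) → ℝ)
    (x : EuclideanSpace ℝ (Fin 2)) : ℝ :=
  ∑ i : Fin 2,
    fderiv ℝ (fun y => fderiv ℝ u y (EuclideanSpace.single i 1)) x (EuclideanSpace.single i 1)

open Real ContinuousLinearMap

section NormSq

variable {E : Type*} [NormedAddCommGroup E] [InnerProductSpace ℝ E] {f f' : ℝ → ℝ} {d : ℝ}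
  {x : E}

theorem HasDerivAt.hasFDerivAt_comp_norm_sq (hf : HasDerivAt f d (‖x‖ ^ 2)) :
    HasFDerivAt (fun y => f (‖y‖ ^ 2)) ((2 * d) • innerSL ℝ x) x :=
  (hf.comp_hasFDerivAt x (hasStrictFDerivAt_norm_sq x).hasFDerivAt).congr_fderiv <| by
    ext v
    simp only [smul_apply, coe_innerSL_apply, nsmul_eq_mul, Nat.cast_ofNat, smul_eq_mul]
    ring

theorem fderiv_comp_norm_sq_apply (hf : HasDerivAt f d (‖x‖ ^ 2)) (v : E) :
    fderiv ℝ (fun y => f (‖y‖ ^ 2)) x v = 2 * d * inner ℝ x v := by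
  simp [hf.hasFDerivAt_comp_norm_sq.fderiv]

theorem fderiv_fderiv_comp_norm_sq_apply {U : Set ℝ} {d' : ℝ} (hU : IsOpen U)
    (hxU : ‖x‖ ^ 2 ∈ U) (hf : ∀ s ∈ U, HasDerivAt f (f' s) s)
    (hf' : HasDerivAt f' d' (‖x‖ ^ 2)) (v : E) :
    fderiv ℝ (fun y => fderiv ℝ (fun y => f (‖y‖ ^ 2)) y v) x v
      = 2 * f' (‖x‖ ^ 2) * ‖v‖ ^ 2 + 4 * d' * inner ℝ x v ^ 2 := by
  have hnhds : (fun y : E => ‖y‖ ^ 2) ⁻¹' U ∈ nhds x :=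
    (hU.preimage (by fun_prop)).mem_nhds hxU
  have hfirst : (fun y => fderiv ℝ (fun y => f (‖y‖ ^ 2)) y v)
      =ᶠ[nhds x] fun y => 2 * f' (‖y‖ ^ 2) * inner ℝ y v := by
    filter_upwards [hnhds] with y hy
    exact fderiv_comp_norm_sq_apply (hf _ hy) v
  have hsecond : HasFDerivAt (fun y => 2 * f' (‖y‖ ^ 2) * inner ℝ y v) _ x :=
    (hf'.hasFDerivAt_comp_norm_sq.const_mul 2).mul
      ((hasFDerivAt_id x).inner ℝ (hasFDerivAt_const v x))
  rw [hfirst.fderiv_eq, hsecond.fderiv]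
  simp only [id_eq, add_apply, smul_apply, comp_apply, prod_apply, id_apply, zero_apply,
    fderivInnerCLM_apply, inner_zero_right, real_inner_self_eq_norm_sq, zero_add, smul_eq_mul,
    coe_innerSL_apply]
  ring

end NormSq

theorem laplacian_comp_norm_sq {f f' : ℝ → ℝ} {d' : ℝ} {x : EuclideanSpace ℝ (Fin 2)}
    {U : Set ℝ} (hU : IsOpen U) (hxU : ‖x‖ ^ 2 ∈ U) (hf : ∀ s ∈ U, HasDerivAt f (f' s) s)
    (hf' : HasDerivAt f' d' (‖x‖ ^ 2)) :
    laplacian (fun y => f (‖y‖ ^ 2)) x = 4 * f' (‖x‖ ^ 2) + 4 * ‖x‖ ^ 2 * d' := by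
  simp only [laplacian, fderiv_fderiv_comp_norm_sq_apply hU hxU hf hf', Fin.sum_univ_two,
    EuclideanSpace.norm_sq_eq x, EuclideanSpace.inner_single_right, PiLp.norm_single,
    norm_eq_abs, sq_abs, norm_one, one_pow, mul_one, conj_trivial, one_mul]
  ring

noncomputable def singularProfile (s : ℝ) : ℝ := -2 * log (-log s / (2 * √2))

section SingularProfile

variable {s : ℝ}

theorem hasDerivAt_singularProfile (hs : s ≠ 0) (hlog : log s ≠ 0) :
    HasDerivAt singularProfile (-2 / (s * log s)) s := by
  refine HasDerivAt.congr_deriv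
    ((((hasDerivAt_log hs).neg.div_const (2 * √2)).log (by simpa using hlog)).const_mul (-2)) ?_
  simp only [Pi.neg_apply]
  field_simp

theorem hasDerivAt_neg_two_div_mul_log (hs : s ≠ 0) (hlog : log s ≠ 0) :
    HasDerivAt (fun s => -2 / (s * log s)) (2 * (log s + 1) / (s * log s) ^ 2) s := by
  refine HasDerivAt.congr_deriv ((hasDerivAt_const s (-2 : ℝ)).div
    ((hasDerivAt_id' s).mul (hasDerivAt_log hs)) (mul_ne_zero hs hlog)) ?_
  field_simp
  ring

theorem exp_singularProfile (hlog : log s ≠ 0) : exp (singularProfile s) = 8 / log s ^ 2 := by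
  set a := -log s / (2 * √2)
  have ha : a ≠ 0 := by simpa [a] using hlog
  have hprofile : singularProfile s = log (a ^ 2)⁻¹ := by
    rw [singularProfile, log_inv, log_pow]; push_cast; ring
  rw [hprofile, exp_log (inv_pos.2 (pow_two_pos_of_ne_zero ha)), div_pow, mul_pow]
  norm_num

theorem singularProfile_ode (hs : s ≠ 0) (hlog : log s ≠ 0) :
    4 * (-2 / (s * log s)) + 4 * s * (2 * (log s + 1) / (s * log s) ^ 2)
      = exp (singularProfile s) / s := by
  rw [exp_singularProfile hlog]
  field_simp
  ring

end SingularProfile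

theorem singularProfile_sq (r : ℝ) :
    singularProfile (r ^ 2) = -2 * log ((1 / √2) * log (1 / r)) := by
  rw [singularProfile, log_pow, one_div r, log_inv]
  congr 2
  field_simp
  push_cast
  ring

/-- The function `V(x) = −2 log((1/√2) log(1/‖x‖))` satisfies `ΔV − e^V/‖x‖² = 0`
for all `x` with `0 < ‖x‖ < 1`. -/
theorem stmt1 (V : EuclideanSpace ℝ (Fin 2) → ℝ)
    (hV : ∀ x, V x = -2 * Real.log ((1 / Real.sqrt 2) * Real.log (1 / ‖x‖))) :
    ∀ x : EuclideanSpace ℝ (Fin 2), 0 < ‖x‖ → ‖x‖ < 1 →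
      laplacian V x - Real.exp (V x) / ‖x‖ ^ 2 = 0 := by
  intro x h0 h1
  have hV' : V = fun y => singularProfile (‖y‖ ^ 2) := funext fun y => by
    rw [hV, singularProfile_sq]
  have hxU : ‖x‖ ^ 2 ∈ Set.Ioo 0 1 := ⟨by positivity, pow_lt_one₀ h0.le h1 two_ne_zero⟩
  have hlog {s : ℝ} (hs : s ∈ Set.Ioo 0 1) : log s ≠ 0 := (log_neg hs.1 hs.2).ne
  rw [hV', laplacian_comp_norm_sq isOpen_Ioo hxU
      (fun s hs => hasDerivAt_singularProfile hs.1.ne' (hlog hs))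
      (hasDerivAt_neg_two_div_mul_log hxU.1.ne' (hlog hxU)),
    singularProfile_ode hxU.1.ne' (hlog hxU), sub_self]
end

section
/- There is no twice continuously differentiable function v : [0, ∞) → ℝ satisfying v(0) = 0, v'(0) = 0, and v''(t) = exp(v(t)) for all t ≥ 0. Equivalently, the maximal solution of the initial value problem v'' = e^v, v(0) = 0, v'(0) = 0 blows up at some finite time. -/
/-!
Write `w = v'`. Since `w' = e^v > 0`, both `w` and `v` are nonnegative, so `v'' ≥ 1` and
`v(t) ≥ t²/2`. Multiplying the equation by `v'` gives the energy inequality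
`(v')² ≥ 2e^v - 2`, hence `v' ≥ e^{v/2}` as soon as `v ≥ 2`, i.e. for `t ≥ 2`. Then
`(e^{-v/2})' = -v' e^{-v/2} / 2 ≤ -1/2` on `[2, ∞)`, so the positive function `e^{-v/2}`,
which is at most `1` at `t = 2`, would be negative at `t = 6`.
-/

open Set Real

theorem le_of_hasDerivAt_le_of_le_Ici {a t : ℝ} {f g f' g' : ℝ → ℝ}
    (hf : ContinuousOn f (Ici a)) (hg : ContinuousOn g (Ici a))
    (hf' : ∀ s, a < s → HasDerivAt f (f' s) s) (hg' : ∀ s, a < s → HasDerivAt g (g' s) s)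
    (hle : ∀ s, a < s → f' s ≤ g' s) (ha : f a ≤ g a) (ht : a ≤ t) : f t ≤ g t := by
  have hmono : MonotoneOn (g - f) (Ici a) :=
    monotoneOn_of_hasDerivWithinAt_nonneg (f' := g' - f') (convex_Ici a) (hg.sub hf)
      (fun s hs => (((hg' s) (by simpa using hs)).sub (hf' s (by simpa using hs))).hasDerivWithinAt)
      (fun s hs => sub_nonneg.mpr (hle s (by simpa using hs)))
  have := hmono self_mem_Ici ht ht
  simp only [Pi.sub_apply] at this
  linarith

structure IsLiouvilleSolution (v w : ℝ → ℝ) : Prop where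
  continuousOn_v : ContinuousOn v (Ici 0)
  continuousOn_w : ContinuousOn w (Ici 0)
  hasDerivAt_v : ∀ t, 0 < t → HasDerivAt v (w t) t
  hasDerivAt_w : ∀ t, 0 < t → HasDerivAt w (exp (v t)) t
  v_zero : v 0 = 0
  w_zero : w 0 = 0

namespace IsLiouvilleSolution

variable {v w : ℝ → ℝ} {t : ℝ}

theorem w_nonneg (h : IsLiouvilleSolution v w) (ht : 0 ≤ t) : 0 ≤ w t :=
  le_of_hasDerivAt_le_of_le_Ici (f' := fun _ => 0) continuousOn_const h.continuousOn_w
    (fun s _ => hasDerivAt_const s 0) h.hasDerivAt_w (fun _ _ => (exp_pos _).le)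
    h.w_zero.ge ht

theorem v_nonneg (h : IsLiouvilleSolution v w) (ht : 0 ≤ t) : 0 ≤ v t :=
  le_of_hasDerivAt_le_of_le_Ici (f' := fun _ => 0) continuousOn_const h.continuousOn_v
    (fun s _ => hasDerivAt_const s 0) h.hasDerivAt_v (fun _ hs => h.w_nonneg hs.le)
    h.v_zero.ge ht

theorem le_w (h : IsLiouvilleSolution v w) (ht : 0 ≤ t) : t ≤ w t :=
  le_of_hasDerivAt_le_of_le_Ici continuousOn_id h.continuousOn_w
    (fun s _ => hasDerivAt_id s) h.hasDerivAt_w (fun _ hs => one_le_exp (h.v_nonneg hs.le))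
    h.w_zero.ge ht

theorem sq_div_two_le_v (h : IsLiouvilleSolution v w) (ht : 0 ≤ t) : t ^ 2 / 2 ≤ v t :=
  le_of_hasDerivAt_le_of_le_Ici (f := fun s => s ^ 2 / 2) (by fun_prop) h.continuousOn_v
    (fun s _ => by simpa using (hasDerivAt_pow 2 s).div_const 2) h.hasDerivAt_v
    (fun _ hs => h.le_w hs.le) (by simp [h.v_zero]) ht

theorem two_mul_exp_sub_two_le_sq_w (h : IsLiouvilleSolution v w) (ht : 0 ≤ t) :
    2 * exp (v t) - 2 ≤ w t ^ 2 := by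
  have hcv := h.continuousOn_v
  have hcw := h.continuousOn_w
  refine le_of_hasDerivAt_le_of_le_Ici (by fun_prop) (by fun_prop)
    (fun s hs => ((h.hasDerivAt_v s hs).exp.const_mul 2).sub_const 2)
    (fun s hs => (h.hasDerivAt_w s hs).pow 2) (fun s _ => le_of_eq ?_)
    (by simp [h.v_zero, h.w_zero]) ht
  simp only [Nat.cast_ofNat]
  ring

theorem exp_half_v_le_w (h : IsLiouvilleSolution v w) (ht : 2 ≤ t) : exp (v t / 2) ≤ w t := by
  have hv : 2 ≤ v t := by nlinarith [h.sq_div_two_le_v (t := t) (by linarith)]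
  have hexp : 2 ≤ exp (v t) := by linarith [add_one_le_exp 2, exp_le_exp.mpr hv]
  have hsq : exp (v t / 2) ^ 2 ≤ w t ^ 2 :=
    calc exp (v t / 2) ^ 2 = exp (v t) := by rw [← exp_nat_mul]; ring_nf
      _ ≤ w t ^ 2 := by linarith [h.two_mul_exp_sub_two_le_sq_w (t := t) (by linarith)]
  exact (pow_le_pow_iff_left₀ (exp_pos _).le (h.w_nonneg (by linarith)) two_ne_zero).mp hsq

theorem exp_neg_v_div_two_le (h : IsLiouvilleSolution v w) (ht : 2 ≤ t) :
    exp (-v t / 2) ≤ exp (-v 2 / 2) - (t - 2) / 2 := by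
  have hcv : ContinuousOn v (Ici 2) := h.continuousOn_v.mono (Ici_subset_Ici.mpr zero_le_two)
  refine le_of_hasDerivAt_le_of_le_Ici (g := fun s => exp (-v 2 / 2) - (s - 2) / 2)
    (by fun_prop) (by fun_prop)
    (fun s hs => ((h.hasDerivAt_v s (by linarith)).neg.div_const 2).exp)
    (fun s _ => by simpa using ((hasDerivAt_id s).sub_const 2).div_const 2 |>.const_sub _)
    (fun s hs => ?_) (by simp) ht
  have hone : 1 ≤ exp (-v s / 2) * w s :=
    calc 1 = exp (-v s / 2) * exp (v s / 2) := by rw [← exp_add]; ring_nf; exact exp_zero.symm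
      _ ≤ exp (-v s / 2) * w s := by gcongr; exact h.exp_half_v_le_w hs.le
  simp only [Pi.neg_apply]
  linarith

end IsLiouvilleSolution

theorem not_isLiouvilleSolution (v w : ℝ → ℝ) : ¬ IsLiouvilleSolution v w := by
  intro h
  have h6 := h.exp_neg_v_div_two_le (t := 6) (by norm_num)
  have h2 : exp (-v 2 / 2) ≤ 1 := exp_le_one_iff.mpr (by linarith [h.v_nonneg zero_le_two])
  linarith [exp_pos (-v 6 / 2)]

theorem isLiouvilleSolution_of_contDiffOn {v : ℝ → ℝ} (hv : ContDiffOn ℝ 2 v (Ici 0))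
    (hv0 : v 0 = 0) (hw0 : deriv v 0 = 0)
    (hode : ∀ t, 0 ≤ t → deriv (deriv v) t = exp (v t)) :
    IsLiouvilleSolution v (deriv v) := by
  have hw : ∀ t, 0 < t → HasDerivAt (deriv v) (exp (v t)) t := by
    intro t ht
    have hC1 : ContDiffOn ℝ 1 (deriv v) (Ioi 0) :=
      (hv.mono Ioi_subset_Ici_self).deriv_of_isOpen isOpen_Ioi (by norm_num)
    rw [← hode t ht.le]
    exact ((hC1.differentiableOn one_ne_zero).differentiableAt (Ioi_mem_nhds ht)).hasDerivAt
  -- `deriv (deriv v) 0 = 1 ≠ 0` cannot be the junk value, so `deriv v` is differentiable at `0`.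
  have hw_zero : DifferentiableAt ℝ (deriv v) 0 := by
    by_contra hnd
    simpa [deriv_zero_of_not_differentiableAt hnd, hv0] using hode 0 le_rfl
  refine ⟨hv.continuousOn, fun t ht => ?_, fun t ht => ?_, hw, hv0, hw0⟩
  · rcases (mem_Ici.mp ht).eq_or_lt with rfl | ht
    · exact hw_zero.continuousAt.continuousWithinAt
    · exact (hw t ht).continuousAt.continuousWithinAt
  · exact ((hv.contDiffAt (Ici_mem_nhds ht)).differentiableAt (by norm_num)).hasDerivAt

/-- There is no twice continuously differentiable function `v : [0,∞) → ℝ` with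
`v(0) = 0`, `v'(0) = 0` and `v'' = e^v` on `[0,∞)`: the solution of this initial value
problem blows up in finite time. -/
theorem stmt5 :
    ¬ ∃ v : ℝ → ℝ, ContDiffOn ℝ 2 v (Set.Ici 0) ∧ v 0 = 0 ∧ deriv v 0 = 0 ∧
      ∀ t : ℝ, 0 ≤ t → deriv (deriv v) t = Real.exp (v t) := by
  rintro ⟨v, hv, hv0, hw0, hode⟩
  exact not_isLiouvilleSolution v (deriv v) (isLiouvilleSolution_of_contDiffOn hv hv0 hw0 hode)
end

section
/- Let c > 0, C > 0, T < 0, let g : (−∞, T] → ℝ be continuous with |g(t)| ≤ C/t⁴ for all t ≤ T, and let u : (−∞, T] → ℝ be a bounded, twice continuously differentiable function satisfying −u''(t) + (2/t²)·(c·exp(u(t)) − 1) = g(t) for all t ≤ T. Then there exists a sequence tₙ → −∞ such that u(tₙ) → −log c as n → ∞. -/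
/-!
Suppose `u + log c` stays at distance `≥ ε` from `0` near `-∞`. By continuity it then has a fixed
sign there, so the forcing `c e^u - 1` is bounded away from `0` with that sign, and since
`|g| ≤ C/t⁴` is negligible against `2/t²`, either `u` or `-u` satisfies `v'' ≥ δ/t²` near `-∞`.
Such a `v` is convex; being bounded above forces `v' ≥ 0`, and then comparing `v' + δ/t` at
`2t` and `t` gives `v'(t) ≥ δ/(2|t|)`, so `v + (δ/2) log(-t)` is monotone and `v → -∞`,
contradicting boundedness.
-/

open Filter Set Real

theorem monotoneOn_Iic_of_hasDerivAt_nonneg {f f' : ℝ → ℝ} {b : ℝ}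
    (hf : ∀ x ≤ b, HasDerivAt f (f' x) x) (hf' : ∀ x ≤ b, 0 ≤ f' x) :
    MonotoneOn f (Iic b) := by
  refine monotoneOn_of_hasDerivWithinAt_nonneg (f' := f') (convex_Iic b)
    (fun x hx => (hf x hx).continuousAt.continuousWithinAt) (fun x hx => ?_) (fun x hx => ?_) <;>
    rw [interior_Iic] at hx
  · exact (hf x hx.le).hasDerivWithinAt
  · exact hf' x hx.le

theorem nonneg_of_hasDerivAt_of_monotoneOn_of_le {f f' : ℝ → ℝ} {b K : ℝ}
    (hf : ∀ x ≤ b, HasDerivAt f (f' x) x) (hf' : MonotoneOn f' (Iic b))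
    (hK : ∀ x ≤ b, f x ≤ K) {a : ℝ} (ha : a ≤ b) : 0 ≤ f' a := by
  by_contra! hneg
  -- `f` lies above its tangent line at `a`, which tends to `+∞` at `-∞`.
  have htangent : MonotoneOn (fun x => f' a * x - f x) (Iic a) :=
    monotoneOn_Iic_of_hasDerivAt_nonneg
      (fun x hx => (hasDerivAt_const_mul (f' a)).sub (hf x (hx.trans ha)))
      (fun x hx => sub_nonneg.2 (hf' (hx.trans ha) ha hx))
  set t := a - (K - f a + 1) / -f' a
  have hta : t ≤ a := sub_le_self _ (div_nonneg (by linarith [hK a ha]) (by linarith))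
  have hline : f' a * (a - t) = -(K - f a + 1) := by
    have : f' a ≠ 0 := hneg.ne
    simp only [t]
    field_simp
    ring
  have := htangent hta self_mem_Iic hta
  simp only at this
  linarith [hK t (hta.trans ha)]

theorem div_neg_two_mul_le_of_div_sq_le_deriv {f' f'' : ℝ → ℝ} {b δ : ℝ} (hb : b < 0)
    (hf' : ∀ x ≤ b, HasDerivAt f' (f'' x) x) (hf'' : ∀ x ≤ b, δ / x ^ 2 ≤ f'' x)
    (hnn : ∀ x ≤ b, 0 ≤ f' x) {x : ℝ} (hx : x ≤ b) : δ / (-2 * x) ≤ f' x := by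
  have hmono : MonotoneOn (fun y => f' y + δ * y⁻¹) (Iic b) :=
    monotoneOn_Iic_of_hasDerivAt_nonneg
      (fun y hy => (hf' y hy).add ((hasDerivAt_inv (by linarith)).const_mul δ))
      (fun y hy => by have := hf'' y hy; rw [div_eq_mul_inv] at this; linarith)
  have h2x : 2 * x ≤ b := by linarith
  have := hmono h2x hx (by linarith)
  simp only at this
  have hx0 : x ≠ 0 := by linarith
  have e : δ * (2 * x)⁻¹ - δ * x⁻¹ = δ / (-2 * x) := by field_simp; ring
  linarith [hnn _ h2x]

theorem monotoneOn_add_mul_log_neg {f f' : ℝ → ℝ} {b δ : ℝ} (hb : b < 0)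
    (hf : ∀ x ≤ b, HasDerivAt f (f' x) x) (hf' : ∀ x ≤ b, δ / (-2 * x) ≤ f' x) :
    MonotoneOn (fun x => f x + δ / 2 * log (-x)) (Iic b) := by
  refine monotoneOn_Iic_of_hasDerivAt_nonneg
    (fun x hx => (hf x hx).add (((hasDerivAt_neg x).log (by linarith)).const_mul (δ / 2)))
    (fun x hx => ?_)
  have hx0 : x ≠ 0 := by linarith
  have e : δ / 2 * (-1 / -x) = -(δ / (-2 * x)) := by field_simp
  linarith [hf' x hx]

theorem tendsto_atBot_of_div_sq_le_deriv2 {f f' f'' : ℝ → ℝ} {δ K : ℝ} (hδ : 0 < δ)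
    (hf : ∀ᶠ x in atBot, HasDerivAt f (f' x) x) (hf' : ∀ᶠ x in atBot, HasDerivAt f' (f'' x) x)
    (hf'' : ∀ᶠ x in atBot, δ / x ^ 2 ≤ f'' x) (hK : ∀ᶠ x in atBot, f x ≤ K) :
    Tendsto f atBot atBot := by
  obtain ⟨b, hb⟩ := eventually_atBot.1
    ((((hf.and hf').and hf'').and hK).and (eventually_lt_atBot 0))
  simp only [imp_and, forall_and] at hb
  obtain ⟨⟨⟨⟨hf, hf'⟩, hf''⟩, hK⟩, hneg⟩ := hb
  have hb0 : b < 0 := hneg b le_rfl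
  have hf'_mono : MonotoneOn f' (Iic b) := monotoneOn_Iic_of_hasDerivAt_nonneg hf'
    (fun x hx => (div_nonneg hδ.le (sq_nonneg x)).trans (hf'' x hx))
  have hχ := monotoneOn_add_mul_log_neg hb0 hf fun x hx =>
    div_neg_two_mul_le_of_div_sq_le_deriv hb0 hf' hf''
      (fun y hy => nonneg_of_hasDerivAt_of_monotoneOn_of_le hf hf'_mono hK hy) hx
  have hlog : Tendsto (fun x => f b + δ / 2 * log (-b) + -(δ / 2) * log (-x))
      atBot atBot :=
    tendsto_atBot_add_const_left _ _ <|
      (tendsto_log_atTop.comp tendsto_neg_atBot_atTop).const_mul_atTop_of_neg (by linarith)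
  refine tendsto_atBot_mono' atBot ?_ hlog
  filter_upwards [eventually_le_atBot b] with x hx
  have := hχ hx self_mem_Iic hx
  simp only at this
  linarith

theorem eventually_div_sq_le_forcing {p g : ℝ → ℝ} {δ C : ℝ} (hδ : 0 < δ)
    (hp : ∀ᶠ t in atBot, δ ≤ p t) (hg : ∀ᶠ t in atBot, |g t| ≤ C / t ^ 4) :
    ∀ᶠ t in atBot, δ / t ^ 2 ≤ 2 / t ^ 2 * p t - g t := by
  have hsq : Tendsto (fun t : ℝ => δ * (-t * -t)) atBot atTop :=
    (tendsto_neg_atBot_atTop.atTop_mul_atTop₀ tendsto_neg_atBot_atTop).const_mul_atTop hδ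
  filter_upwards [hp, hg, hsq.eventually_ge_atTop C, eventually_lt_atBot 0]
    with t hpt hgt hCt ht0
  have ht2 : 0 < t ^ 2 := Even.pow_pos (by decide) ht0.ne
  have hgδ : C / t ^ 4 ≤ δ / t ^ 2 := by
    rw [div_le_div_iff₀ (Even.pow_pos (by decide) ht0.ne) ht2]
    nlinarith
  have hpδ : 2 / t ^ 2 * δ ≤ 2 / t ^ 2 * p t := by gcongr
  have e : 2 / t ^ 2 * δ = 2 * (δ / t ^ 2) := by ring
  linarith [le_abs_self (g t)]

theorem ContDiffOn.eventually_hasDerivAt_deriv {u : ℝ → ℝ} {T : ℝ}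
    (hu : ContDiffOn ℝ 2 u (Iic T)) :
    ∀ᶠ t in atBot, HasDerivAt u (deriv u t) t ∧ HasDerivAt (deriv u) (deriv (deriv u) t) t := by
  have hu' : ContDiffOn ℝ 1 (deriv u) (Iio T) :=
    (hu.mono Iio_subset_Iic_self).deriv_of_isOpen isOpen_Iio (by norm_num)
  filter_upwards [eventually_lt_atBot T] with t ht
  exact ⟨((hu.contDiffAt (Iic_mem_nhds ht)).differentiableAt (by norm_num)).hasDerivAt,
    ((hu'.contDiffAt (Iio_mem_nhds ht)).differentiableAt one_ne_zero).hasDerivAt⟩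

theorem eventually_le_or_eventually_le_neg {w : ℝ → ℝ} {T ε : ℝ} (hw : ContinuousOn w (Iic T))
    (hε : 0 < ε) (h : ∀ᶠ t in atBot, ε ≤ |w t|) :
    (∀ᶠ t in atBot, ε ≤ w t) ∨ ∀ᶠ t in atBot, w t ≤ -ε := by
  obtain ⟨t₀, ht₀⟩ := eventually_atBot.1 (h.and (eventually_le_atBot T))
  have hno_root {s t : ℝ} (hs : s ≤ t₀) (ht : t ≤ t₀) (hws : w s ≤ 0) (hwt : 0 ≤ w t) : False := by
    obtain ⟨r, hr, hr0⟩ := isPreconnected_Iic.intermediate_value hs ht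
      (hw.mono (Iic_subset_Iic.2 (ht₀ t₀ le_rfl).2)) ⟨hws, hwt⟩
    have := (ht₀ r hr).1
    rw [hr0, abs_zero] at this
    linarith
  rcases le_total 0 (w t₀) with hpos | hneg
  · refine .inl (eventually_atBot.2 ⟨t₀, fun t ht => (le_abs'.1 (ht₀ t ht).1).resolve_left ?_⟩)
    exact fun hwt => hno_root ht le_rfl (by linarith) hpos
  · refine .inr (eventually_atBot.2 ⟨t₀, fun t ht => (le_abs'.1 (ht₀ t ht).1).resolve_right ?_⟩)
    exact fun hwt => hno_root le_rfl ht hneg (by linarith)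

theorem tendsto_atBot_of_deriv2_eq_forcing {v v' v'' p g : ℝ → ℝ} {δ C K : ℝ} (hδ : 0 < δ)
    (hv : ∀ᶠ t in atBot, HasDerivAt v (v' t) t ∧ HasDerivAt v' (v'' t) t)
    (hode : ∀ᶠ t in atBot, v'' t = 2 / t ^ 2 * p t - g t)
    (hp : ∀ᶠ t in atBot, δ ≤ p t) (hg : ∀ᶠ t in atBot, |g t| ≤ C / t ^ 4)
    (hK : ∀ᶠ t in atBot, v t ≤ K) : Tendsto v atBot atBot :=
  tendsto_atBot_of_div_sq_le_deriv2 hδ (hv.mono fun _ h => h.1) (hv.mono fun _ h => h.2)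
    ((hode.and (eventually_div_sq_le_forcing hδ hp hg)).mono fun _ h => h.1 ▸ h.2) hK

theorem stmt8_general (c C T : ℝ) (hc : 0 < c) (g : ℝ → ℝ)
    (hgb : ∀ t ≤ T, |g t| ≤ C / t ^ 4)
    (u : ℝ → ℝ) (hub : ∃ K : ℝ, ∀ t ≤ T, |u t| ≤ K)
    (hreg : ContDiffOn ℝ 2 u (Set.Iic T))
    (hode : ∀ t ≤ T, -deriv (deriv u) t + (2 / t ^ 2) * (c * Real.exp (u t) - 1) = g t) :
    ∃ tseq : ℕ → ℝ, Tendsto tseq atTop atBot ∧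
      Tendsto (fun n => u (tseq n)) atTop (nhds (-Real.log c)) := by
  suffices MapClusterPt (-log c) atBot u by
    obtain ⟨ψ, hψu, hψ⟩ := this.exists_seq_tendsto
    exact ⟨ψ, hψ, hψu⟩
  obtain ⟨K, hK⟩ := hub
  have hbdd : ∀ᶠ t in atBot, |u t| ≤ K := eventually_atBot.2 ⟨T, hK⟩
  have hg' : ∀ᶠ t in atBot, |g t| ≤ C / t ^ 4 := eventually_atBot.2 ⟨T, hgb⟩
  have hode' : ∀ᶠ t in atBot, deriv (deriv u) t = 2 / t ^ 2 * (c * exp (u t) - 1) - g t :=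
    eventually_atBot.2 ⟨T, fun t ht => by linarith [hode t ht]⟩
  have hce (t : ℝ) : c * exp (u t) = exp (u t + log c) := by rw [exp_add, exp_log hc, mul_comm]
  rw [Metric.nhds_basis_ball.mapClusterPt_iff_frequently]
  intro ε hε
  by_contra hnear
  have hfar : ∀ᶠ t in atBot, ε ≤ |u t + log c| :=
    (not_frequently.1 hnear).mono fun t ht => by simpa [Real.dist_eq] using ht
  rcases eventually_le_or_eventually_le_neg (w := fun t => u t + log c)
    (hreg.continuousOn.add continuousOn_const) hε hfar with hpos | hneg
  · exact not_isBoundedUnder_of_tendsto_atBot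
      (tendsto_atBot_of_deriv2_eq_forcing (sub_pos.2 (one_lt_exp_iff.2 hε))
        hreg.eventually_hasDerivAt_deriv hode'
        (hpos.mono fun t ht => by rw [hce]; gcongr) hg' (hbdd.mono fun t ht => (abs_le.1 ht).2))
      (isBoundedUnder_of_eventually_ge (hbdd.mono fun t ht => (abs_le.1 ht).1))
  · exact not_isBoundedUnder_of_tendsto_atBot
      (tendsto_atBot_of_deriv2_eq_forcing (v := fun t => -u t) (p := fun t => 1 - c * exp (u t))
        (g := fun t => -g t)
        (sub_pos.2 (exp_lt_one_iff.2 (neg_neg_of_pos hε)))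
        (hreg.eventually_hasDerivAt_deriv.mono fun t ht => ⟨ht.1.neg, ht.2.neg⟩)
        (hode'.mono fun t ht => by rw [ht]; ring)
        (hneg.mono fun t ht => by rw [hce]; gcongr) (hg'.mono fun t ht => by rwa [abs_neg])
        (hbdd.mono fun t ht => neg_le.1 (abs_le.1 ht).1))
      (isBoundedUnder_of_eventually_ge (hbdd.mono fun t ht => neg_le_neg (abs_le.1 ht).2))

/-- If `u` is a bounded, twice continuously differentiable solution on `(−∞, T]` of
`−u'' + (2/t²)(c e^u − 1) = g`, where `|g(t)| ≤ C/t⁴`, then there is a sequence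
`tₙ → −∞` along which `u(tₙ) → −log c`. -/
theorem stmt8 (c C T : ℝ) (hc : 0 < c) (hC : 0 < C) (hT : T < 0)
    (g : ℝ → ℝ) (hg : ContinuousOn g (Set.Iic T))
    (hgb : ∀ t ≤ T, |g t| ≤ C / t ^ 4)
    (u : ℝ → ℝ) (hub : ∃ K : ℝ, ∀ t ≤ T, |u t| ≤ K)
    (hreg : ContDiffOn ℝ 2 u (Set.Iic T))
    (hode : ∀ t ≤ T, -deriv (deriv u) t + (2 / t ^ 2) * (c * Real.exp (u t) - 1) = g t) :
    ∃ tseq : ℕ → ℝ, Tendsto tseq atTop atBot ∧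
      Tendsto (fun n => u (tseq n)) atTop (nhds (-Real.log c)) :=
  stmt8_general c C T hc g hgb u hub hreg hode
end

section
/- Let c > 0, C > 0, T < 0, and let g : (−∞, T] → ℝ be continuous with |g(t)| ≤ C/t⁴ for all t ≤ T. If u₁, u₂ : (−∞, T] → ℝ are bounded, twice continuously differentiable functions both satisfying −u''(t) + (2/t²)·(c·exp(u(t)) − 1) = g(t) for all t ≤ T together with u₁(T) = u₂(T) = 0, then u₁ = u₂ on (−∞, T]. -/
/-! The difference `w = u₁ - u₂` vanishes at `T` and satisfies `w'' = (2c/t²)(e^{u₁} - e^{u₂})`,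
which is `≥ 0` wherever `w > 0`; so `w` is convex on every interval where it is positive.
If `w(t₀) > 0`, let `b ∈ (t₀, T]` be the first point to the right where `w ≤ 0`. A point `a < t₀`
with `w(a) ≤ 0` is impossible, since convexity on `[a, b]` would force `w(t₀) ≤ 0`. Hence `w > 0` on
`(-∞, b)`, and convexity makes `w` grow at least linearly towards `-∞`, contradicting boundedness.
Exchanging `u₁` and `u₂` gives `u₁ = u₂`. -/

open Set Real

section Zeros

variable {w : ℝ → ℝ} {a b : ℝ}

lemma exists_nonpos_forall_pos_Ioc (hab : a ≤ b) (hw : ContinuousOn w (Icc a b)) (ha : w a ≤ 0) :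
    ∃ c ∈ Icc a b, w c ≤ 0 ∧ ∀ s ∈ Ioc c b, 0 < w s := by
  set Z := Icc a b ∩ w ⁻¹' Iic 0
  have hZ : IsClosed Z := hw.preimage_isClosed_of_isClosed isClosed_Icc isClosed_Iic
  have hbdd : BddAbove Z := ⟨b, fun s hs => hs.1.2⟩
  obtain ⟨hc, hwc⟩ := hZ.csSup_mem ⟨a, left_mem_Icc.2 hab, ha⟩ hbdd
  refine ⟨sSup Z, hc, hwc, fun s hs => ?_⟩
  by_contra! hws
  exact (le_csSup hbdd ⟨⟨hc.1.trans hs.1.le, hs.2⟩, hws⟩).not_gt hs.1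

lemma exists_nonpos_forall_pos_Ico (hab : a ≤ b) (hw : ContinuousOn w (Icc a b)) (hb : w b ≤ 0) :
    ∃ c ∈ Icc a b, w c ≤ 0 ∧ ∀ s ∈ Ico a c, 0 < w s := by
  set Z := Icc a b ∩ w ⁻¹' Iic 0
  have hZ : IsClosed Z := hw.preimage_isClosed_of_isClosed isClosed_Icc isClosed_Iic
  have hbdd : BddBelow Z := ⟨a, fun s hs => hs.1.1⟩
  obtain ⟨hc, hwc⟩ := hZ.csInf_mem ⟨b, right_mem_Icc.2 hab, hb⟩ hbdd
  refine ⟨sInf Z, hc, hwc, fun s hs => ?_⟩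
  by_contra! hws
  exact (csInf_le hbdd ⟨⟨hs.1, hs.2.le.trans hc.2⟩, hws⟩).not_gt hs.2

end Zeros

lemma convexOn_Icc_of_deriv2_nonneg {w : ℝ → ℝ} {a b : ℝ} (hcont : ContinuousOn w (Icc a b))
    (hw : ∀ s ∈ Ioo a b, ContDiffAt ℝ 2 w s) (hw'' : ∀ s ∈ Ioo a b, 0 ≤ deriv (deriv w) s) :
    ConvexOn ℝ (Icc a b) w := by
  refine convexOn_of_deriv2_nonneg (convex_Icc a b) hcont ?_ ?_ ?_ <;> rw [interior_Icc]
  · exact fun s hs => ((hw s hs).differentiableAt (by norm_num)).differentiableWithinAt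
  · exact fun s hs =>
      (((hw s hs).derivWithin (m := 1) le_rfl).differentiableAt one_ne_zero).differentiableWithinAt
  · exact hw''

lemma ConvexOn.add_mul_div_sub_le_of_right_nonpos {w : ℝ → ℝ} {s t b : ℝ}
    (hf : ConvexOn ℝ (Icc s b) w) (hst : s < t) (htb : t < b) (hb : w b ≤ 0) :
    w t + (t - s) * (w t / (b - t)) ≤ w s := by
  have hslope := hf.slope_mono_adjacent (left_mem_Icc.2 (hst.trans htb).le)
    (right_mem_Icc.2 (hst.trans htb).le) hst htb
  have hright : (w b - w t) / (b - t) ≤ -(w t / (b - t)) := by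
    rw [← neg_div]
    exact div_le_div_of_nonneg_right (by linarith) (sub_pos.2 htb).le
  have := (div_le_iff₀ (sub_pos.2 hst)).1 (hslope.trans hright)
  linarith

theorem nonpos_of_deriv2_nonneg_of_pos {w : ℝ → ℝ} {T K : ℝ} (hw : ContDiffOn ℝ 2 w (Iic T))
    (hK : ∀ t ≤ T, w t ≤ K) (hw'' : ∀ t < T, 0 < w t → 0 ≤ deriv (deriv w) t) (hT : w T ≤ 0) :
    ∀ t ≤ T, w t ≤ 0 := by
  have hcont : ContinuousOn w (Iic T) := hw.continuousOn
  have hconv : ∀ a b, b ≤ T → (∀ s ∈ Ioo a b, 0 < w s) → ConvexOn ℝ (Icc a b) w :=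
    fun a b hbT hpos => convexOn_Icc_of_deriv2_nonneg
      (hcont.mono (Icc_subset_Iic_self.trans (Iic_subset_Iic.2 hbT)))
      (fun s hs => hw.contDiffAt (Iic_mem_nhds (hs.2.trans_le hbT)))
      (fun s hs => hw'' s (hs.2.trans_le hbT) (hpos s hs))
  intro t₀ ht₀
  by_contra! h₀
  obtain ⟨b, ⟨ht₀b, hbT⟩, hwb, hpos_right⟩ :=
    exists_nonpos_forall_pos_Ico ht₀ (hcont.mono Icc_subset_Iic_self) hT
  replace ht₀b : t₀ < b := ht₀b.lt_of_ne (by rintro rfl; linarith)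
  have hpos_left : ∀ s ≤ t₀, 0 < w s := by
    intro s hs
    by_contra! hws
    obtain ⟨a, ⟨-, hat₀⟩, hwa, hpos⟩ := exists_nonpos_forall_pos_Ioc hs
      (hcont.mono (Icc_subset_Iic_self.trans (Iic_subset_Iic.2 ht₀))) hws
    have hab : a ≤ b := hat₀.trans ht₀b.le
    have hconv_ab := hconv a b hbT fun r hr => (le_or_gt r t₀).elim
      (fun hr' => hpos r ⟨hr.1, hr'⟩) (fun hr' => hpos_right r ⟨hr'.le, hr.2⟩)
    have := hconv_ab.le_on_segment (left_mem_Icc.2 hab) (right_mem_Icc.2 hab)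
      (by rw [segment_eq_Icc hab]; exact ⟨hat₀, ht₀b.le⟩)
    linarith [max_le hwa hwb]
  have hpos : ∀ r < b, 0 < w r := fun r hr => (le_or_gt r t₀).elim (hpos_left r)
    (fun hr' => hpos_right r ⟨hr'.le, hr⟩)
  set m := w t₀ / (b - t₀)
  have hm : 0 < m := div_pos h₀ (sub_pos.2 ht₀b)
  have hgap : 0 < K - w t₀ + 1 := by linarith [hK t₀ ht₀]
  set s := t₀ - (K - w t₀ + 1) / m
  have hs : s < t₀ := sub_lt_self _ (div_pos hgap hm)
  have hgrowth := (hconv s b hbT fun r hr => hpos r hr.2).add_mul_div_sub_le_of_right_nonpos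
    hs ht₀b hwb
  have hstep : (t₀ - s) * m = K - w t₀ + 1 := by simp only [s]; field_simp; ring
  linarith [hK s (hs.le.trans ht₀)]

lemma deriv_deriv_sub {u₁ u₂ : ℝ → ℝ} {t : ℝ} (h₁ : ContDiffAt ℝ 2 u₁ t)
    (h₂ : ContDiffAt ℝ 2 u₂ t) :
    deriv (deriv (u₁ - u₂)) t = deriv (deriv u₁) t - deriv (deriv u₂) t := by
  simpa only [iteratedDeriv_succ, iteratedDeriv_zero] using iteratedDeriv_sub h₁ h₂

theorem le_of_bounded_solutions {c T : ℝ} {g u₁ u₂ : ℝ → ℝ} (hc : 0 < c)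
    (hub₁ : ∃ K : ℝ, ∀ t ≤ T, |u₁ t| ≤ K) (hub₂ : ∃ K : ℝ, ∀ t ≤ T, |u₂ t| ≤ K)
    (hreg₁ : ContDiffOn ℝ 2 u₁ (Iic T)) (hreg₂ : ContDiffOn ℝ 2 u₂ (Iic T))
    (hode₁ : ∀ t ≤ T, -deriv (deriv u₁) t + (2 / t ^ 2) * (c * exp (u₁ t) - 1) = g t)
    (hode₂ : ∀ t ≤ T, -deriv (deriv u₂) t + (2 / t ^ 2) * (c * exp (u₂ t) - 1) = g t)
    (hT : u₁ T = u₂ T) :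
    ∀ t ≤ T, u₁ t ≤ u₂ t := by
  obtain ⟨K₁, hK₁⟩ := hub₁
  obtain ⟨K₂, hK₂⟩ := hub₂
  have hbound : ∀ t ≤ T, (u₁ - u₂) t ≤ K₁ + K₂ := fun t ht => by
    rw [Pi.sub_apply]
    linarith [(abs_le.1 (hK₁ t ht)).2, (abs_le.1 (hK₂ t ht)).1]
  have hconvex : ∀ t < T, 0 < (u₁ - u₂) t → 0 ≤ deriv (deriv (u₁ - u₂)) t := by
    intro t ht hpos
    rw [deriv_deriv_sub (hreg₁.contDiffAt (Iic_mem_nhds ht)) (hreg₂.contDiffAt (Iic_mem_nhds ht)),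
      show deriv (deriv u₁) t - deriv (deriv u₂) t = 2 / t ^ 2 * (c * (exp (u₁ t) - exp (u₂ t)))
        by linear_combination hode₂ t ht.le - hode₁ t ht.le]
    have hexp := exp_lt_exp.2 (sub_pos.1 hpos)
    exact mul_nonneg (by positivity) (mul_nonneg hc.le (sub_nonneg.2 hexp.le))
  intro t ht
  exact sub_nonpos.1 <|
    nonpos_of_deriv2_nonneg_of_pos (hreg₁.sub hreg₂) hbound hconvex (by simp [hT]) t ht

theorem stmt9_general (c T : ℝ) (hc : 0 < c)
    (g : ℝ → ℝ)
    (u₁ u₂ : ℝ → ℝ)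
    (hub₁ : ∃ K : ℝ, ∀ t ≤ T, |u₁ t| ≤ K) (hub₂ : ∃ K : ℝ, ∀ t ≤ T, |u₂ t| ≤ K)
    (hreg₁ : ContDiffOn ℝ 2 u₁ (Set.Iic T)) (hreg₂ : ContDiffOn ℝ 2 u₂ (Set.Iic T))
    (hode₁ : ∀ t ≤ T, -deriv (deriv u₁) t + (2 / t ^ 2) * (c * Real.exp (u₁ t) - 1) = g t)
    (hode₂ : ∀ t ≤ T, -deriv (deriv u₂) t + (2 / t ^ 2) * (c * Real.exp (u₂ t) - 1) = g t)
    (hT₁ : u₁ T = 0) (hT₂ : u₂ T = 0) :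
    Set.EqOn u₁ u₂ (Set.Iic T) := fun t ht =>
  le_antisymm
    (le_of_bounded_solutions hc hub₁ hub₂ hreg₁ hreg₂ hode₁ hode₂ (hT₁.trans hT₂.symm) t ht)
    (le_of_bounded_solutions hc hub₂ hub₁ hreg₂ hreg₁ hode₂ hode₁ (hT₂.trans hT₁.symm) t ht)

/-- If `u₁, u₂` are bounded, twice continuously differentiable solutions on `(−∞, T]` of
`−u'' + (2/t²)(c e^u − 1) = g`, where `|g(t)| ≤ C/t⁴`, with `u₁(T) = u₂(T) = 0`, then
`u₁ = u₂` on `(−∞, T]`. -/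
theorem stmt9 (c C T : ℝ) (hc : 0 < c) (hC : 0 < C) (hT : T < 0)
    (g : ℝ → ℝ) (hg : ContinuousOn g (Set.Iic T))
    (hgb : ∀ t ≤ T, |g t| ≤ C / t ^ 4)
    (u₁ u₂ : ℝ → ℝ)
    (hub₁ : ∃ K : ℝ, ∀ t ≤ T, |u₁ t| ≤ K) (hub₂ : ∃ K : ℝ, ∀ t ≤ T, |u₂ t| ≤ K)
    (hreg₁ : ContDiffOn ℝ 2 u₁ (Set.Iic T)) (hreg₂ : ContDiffOn ℝ 2 u₂ (Set.Iic T))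
    (hode₁ : ∀ t ≤ T, -deriv (deriv u₁) t + (2 / t ^ 2) * (c * Real.exp (u₁ t) - 1) = g t)
    (hode₂ : ∀ t ≤ T, -deriv (deriv u₂) t + (2 / t ^ 2) * (c * Real.exp (u₂ t) - 1) = g t)
    (hT₁ : u₁ T = 0) (hT₂ : u₂ T = 0) :
    Set.EqOn u₁ u₂ (Set.Iic T) :=
  stmt9_general c T hc g u₁ u₂ hub₁ hub₂ hreg₁ hreg₂ hode₁ hode₂ hT₁ hT₂
end

section
/- There exist constants c₀ > 0 and δ₀ ∈ (0, 1) such that for every δ ∈ (0, δ₀) there exists a twice continuously differentiable function V : [log(1/δ), log(1/δ) + c₀/δ] → ℝ satisfying V(log(1/δ)) = 0, V'(log(1/δ)) = 0, and V''(t) = δ²·exp(V(t)) for all t in that interval. -/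
/-!
The equation `V'' = 2 k² e^V` has the explicit solution `V t = -2 log cos (k (t - t₀))`
(i.e. `log sec²`), with `V(t₀) = V'(t₀) = 0`, since `V' = 2k tan` and `V'' = 2k² sec² = 2k² e^V`.
Taking `k = δ / √2` gives `V'' = δ² e^V`, and the solution lives as long as
`k (t - t₀) < π / 2`, i.e. for `t - t₀` up to order `1 / δ`.
-/

open Real Set

noncomputable def logSecSq (k t₀ t : ℝ) : ℝ := -2 * log (cos (k * (t - t₀)))

section logSecSq

variable {k t₀ t : ℝ}

lemma hasDerivAt_mul_sub (k t₀ t : ℝ) : HasDerivAt (fun s => k * (s - t₀)) k t := by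
  simpa using ((hasDerivAt_id t).sub_const t₀).const_mul k

lemma hasDerivAt_logSecSq (h : cos (k * (t - t₀)) ≠ 0) :
    HasDerivAt (logSecSq k t₀) (2 * k * tan (k * (t - t₀))) t := by
  have hcos := (hasDerivAt_cos _).comp t (hasDerivAt_mul_sub k t₀ t)
  refine (((hasDerivAt_log h).comp t hcos).const_mul (-2 : ℝ)).congr_deriv ?_
  rw [tan_eq_sin_div_cos]
  field_simp

lemma exp_logSecSq (h : cos (k * (t - t₀)) ≠ 0) :
    exp (logSecSq k t₀ t) = 1 / cos (k * (t - t₀)) ^ 2 := by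
  have hlog : -2 * log (cos (k * (t - t₀))) = -log (cos (k * (t - t₀)) ^ 2) := by
    rw [log_pow]
    ring
  rw [logSecSq, hlog, exp_neg, exp_log (by positivity), one_div]

lemma deriv_deriv_logSecSq (h : cos (k * (t - t₀)) ≠ 0) :
    deriv (deriv (logSecSq k t₀)) t = 2 * k ^ 2 * exp (logSecSq k t₀ t) := by
  have hnhds : ∀ᶠ s in nhds t, cos (k * (s - t₀)) ≠ 0 :=
    ((continuous_cos.comp (by fun_prop)).isOpen_preimage _ isOpen_ne).mem_nhds h
  have hderiv : deriv (logSecSq k t₀) =ᶠ[nhds t] fun s => 2 * k * tan (k * (s - t₀)) :=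
    hnhds.mono fun s hs => (hasDerivAt_logSecSq hs).deriv
  have htan : HasDerivAt (fun s => 2 * k * tan (k * (s - t₀)))
      (2 * k * (1 / cos (k * (t - t₀)) ^ 2 * k)) t :=
    ((hasDerivAt_tan h).comp t (hasDerivAt_mul_sub k t₀ t)).const_mul (2 * k)
  rw [hderiv.deriv_eq, htan.deriv, exp_logSecSq h]
  ring

lemma contDiffAt_logSecSq {n : WithTop ℕ∞} (h : cos (k * (t - t₀)) ≠ 0) :
    ContDiffAt ℝ n (logSecSq k t₀) t := by
  have hinner : ContDiff ℝ n fun s : ℝ => cos (k * (s - t₀)) :=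
    contDiff_cos.comp (contDiff_const.mul (contDiff_id.sub contDiff_const))
  exact contDiffAt_const.mul (hinner.contDiffAt.log h)

lemma cos_mul_sub_pos {L : ℝ} (hk : 0 ≤ k) (hkL : k * L < π / 2) (ht : t ∈ Icc t₀ (t₀ + L)) :
    0 < cos (k * (t - t₀)) := by
  have hnonneg : 0 ≤ k * (t - t₀) := mul_nonneg hk (by linarith [ht.1])
  have hle : k * (t - t₀) ≤ k * L := mul_le_mul_of_nonneg_left (by linarith [ht.2]) hk
  exact cos_pos_of_mem_Ioo ⟨by linarith [pi_pos], by linarith⟩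

end logSecSq

/-- There are constants `c₀ > 0` and `δ₀ ∈ (0,1)` such that for every `δ ∈ (0, δ₀)` the
initial value problem `V'' = δ² e^V`, `V(log(1/δ)) = 0`, `V'(log(1/δ)) = 0` has a twice
continuously differentiable solution on the interval `[log(1/δ), log(1/δ) + c₀/δ]`. -/
theorem stmt15 :
    ∃ c₀ : ℝ, 0 < c₀ ∧ ∃ δ₀ ∈ Set.Ioo (0 : ℝ) 1, ∀ δ ∈ Set.Ioo (0 : ℝ) δ₀,
      ∃ V : ℝ → ℝ,
        ContDiffOn ℝ 2 V (Set.Icc (Real.log (1 / δ)) (Real.log (1 / δ) + c₀ / δ)) ∧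
        V (Real.log (1 / δ)) = 0 ∧ deriv V (Real.log (1 / δ)) = 0 ∧
        ∀ t ∈ Set.Icc (Real.log (1 / δ)) (Real.log (1 / δ) + c₀ / δ),
          deriv (deriv V) t = δ ^ 2 * Real.exp (V t) := by
  refine ⟨1, one_pos, 1 / 2, ⟨by norm_num, by norm_num⟩, ?_⟩
  rintro δ ⟨hδ, -⟩
  set t₀ := log (1 / δ)
  set k := δ / √2
  have hk2 : 2 * k ^ 2 = δ ^ 2 := by
    rw [div_pow, sq_sqrt zero_le_two]
    ring
  have hkL : k * (1 / δ) < π / 2 := by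
    have hk_div : k * (1 / δ) = 1 / √2 := by simp only [k]; field_simp
    have hlt_one : 1 / √2 < 1 := (div_lt_one (by positivity)).2 one_lt_sqrt_two
    linarith [pi_gt_three]
  have hcos : ∀ t ∈ Icc t₀ (t₀ + 1 / δ), cos (k * (t - t₀)) ≠ 0 := fun t ht =>
    (cos_mul_sub_pos (by positivity) hkL ht).ne'
  have ht₀ : t₀ ∈ Icc t₀ (t₀ + 1 / δ) := ⟨le_rfl, by simp [hδ.le]⟩
  refine ⟨logSecSq k t₀, fun t ht => (contDiffAt_logSecSq (hcos t ht)).contDiffWithinAt,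
    by simp [logSecSq], ?_, fun t ht => ?_⟩
  · simp [(hasDerivAt_logSecSq (hcos t₀ ht₀)).deriv]
  · rw [deriv_deriv_logSecSq (hcos t ht), hk2]
end
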